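/- Let p be prime and consider the invertible linear cellular automaton T on Z_{p²}^Z with local rule f(x_l,...,x_r) = p·Σ_{i=l}^{r-1} β_i x_i + λ_r x_r (mod p²) where gcd(p, λ_r) = 1. Then the inverse of T is the cellular automaton with a local rule g supported on coordinates -(2r-l),...,-r of the form g(x_{-(2r-l)},...,x_{-r}) = -p·Σ_{i=-(2r-l)}^{-r} γ_i x_i + λ_r^{-1} x_{-r} (mod p²), for suitable γ_i ∈ Z_{p²}; in particular the inverse of a right permutative invertible linear CA is again right permutative. -/

import Mathlib

/-!
Write `ε = p`, so that `ε² = 0` in `ZMod (p²)`, and `μ = λ_r⁻¹`. Then `T = λ_r σ^r + ε B` with `σ`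
the shift and `B` a linear CA, and since linear CAs commute with shifts and `ε² = 0`,
`(λ_r σ^r + ε B)(μ σ^{-r} - ε μ² B σ^{-2r}) = 1 = (μ σ^{-r} - ε μ² B σ^{-2r})(λ_r σ^r + ε B)`.
The coefficients of `μ² B σ^{-2r}` are those of `B` moved to `-(2r-l),…,-r-1`, so `γ (-r) = 0`.
-/

open Finset

section LinearCA

variable {R : Type*} [CommRing R]

def linearCA (s : Finset ℤ) (β : ℤ → R) (x : ℤ → R) (n : ℤ) : R :=
  ∑ i ∈ s, β i * x (n + i)

lemma mul_linearCA_of_mul_eq {ε : R} (c : R) (s : Finset ℤ) (β x y : ℤ → R) (r : ℤ)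
    (h : ∀ k, ε * y k = ε * (c * x (k + r))) (n : ℤ) :
    ε * linearCA s β y n = ε * c * linearCA s β x (n + r) := by
  simp only [linearCA, mul_sum]
  refine sum_congr rfl fun i _ => ?_
  rw [show n + r + i = n + i + r by ring]
  linear_combination β i * h (n + i)

variable {ε lam μ : R} (hε : ε * ε = 0) (hμ : μ * lam = 1)
  {s s' : Finset ℤ} {β β' : ℤ → R} {r : ℤ} {T G : (ℤ → R) → ℤ → R}
  (hT : ∀ x n, T x n = ε * linearCA s β x n + lam * x (n + r))
  (hG : ∀ y k, G y k = -(ε * linearCA s' β' y k) + μ * y (k - r))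
  (hβ' : ∀ y k, linearCA s' β' y k = μ * μ * linearCA s β y (k - 2 * r))
include hε hμ hT hG hβ'

lemma linearCA_perturbed_shift_leftInverse (x : ℤ → R) (n : ℤ) : G (T x) n = x n := by
  have key := mul_linearCA_of_mul_eq lam s β x (T x) r
    (fun k => by rw [hT]; linear_combination linearCA s β x k * hε) (n - 2 * r)
  rw [hG, hβ', hT, show n - r + r = n by ring]
  rw [show n - 2 * r + r = n - r by ring] at key
  linear_combination (-μ * μ) * key + (x n - μ * ε * linearCA s β x (n - r)) * hμ

lemma linearCA_perturbed_shift_rightInverse (x : ℤ → R) (n : ℤ) : T (G x) n = x n := by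
  have key := mul_linearCA_of_mul_eq μ s β x (G x) (-r)
    (fun k => by rw [hG, ← sub_eq_add_neg]; linear_combination -(linearCA s' β' x k) * hε) n
  rw [hT, hG, hβ', show n + r - r = n by ring, show n + r - 2 * r = n + -r by ring]
  linear_combination key + (x n - ε * μ * linearCA s β x (n + -r)) * hμ

end LinearCA

lemma linearCA_Icc_shift {R : Type*} [CommRing R] (c : R) (β : ℤ → R) (l r : ℤ)
    (y : ℤ → R) (k : ℤ) :
    linearCA (Icc (-(2 * r - l)) (-r)) (fun j => if j < -r then c * β (j + 2 * r) else 0) y k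
      = c * linearCA (Icc l (r - 1)) β y (k - 2 * r) := by
  have hIcc : Icc (-(2 * r - l)) (-r) = (Icc l r).map (addRightEmbedding (-(2 * r))) := by
    rw [map_add_right_Icc]; congr 1 <;> ring
  have hfilter : (Icc l r).filter (· < r) = Icc l (r - 1) := by
    ext i; simp only [mem_filter, mem_Icc]; omega
  simp only [linearCA, hIcc, sum_map, addRightEmbedding_apply, mul_sum, ← hfilter, sum_filter]
  refine sum_congr rfl fun i _ => ?_
  split_ifs
  · rw [show i + -(2 * r) + 2 * r = i by ring, show k + (i + -(2 * r)) = k - 2 * r + i by ring]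
    ring
  · omega
  · omega
  · simp

theorem stmt7_general (p : ℕ) (l r : ℤ)
    (β : ℤ → ZMod (p ^ 2)) (lamr lamrinv : ZMod (p ^ 2)) (hinv : lamrinv * lamr = 1)
    (T : (ℤ → ZMod (p ^ 2)) → ℤ → ZMod (p ^ 2))
    (hT : ∀ x n, T x n =
      (p : ZMod (p ^ 2)) * ∑ i ∈ Finset.Icc l (r - 1), β i * x (n + i) + lamr * x (n + r)) :
    ∃ γ : ℤ → ZMod (p ^ 2),
      (∀ x : ℤ → ZMod (p ^ 2), ∀ n : ℤ,
        (fun (y : ℤ → ZMod (p ^ 2)) (k : ℤ) =>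
            -((p : ZMod (p ^ 2)) * ∑ i ∈ Finset.Icc (-(2 * r - l)) (-r), γ i * y (k + i)) +
              lamrinv * y (k - r)) (T x) n = x n) ∧
      (∀ x : ℤ → ZMod (p ^ 2), ∀ n : ℤ,
        T (fun k =>
            -((p : ZMod (p ^ 2)) * ∑ i ∈ Finset.Icc (-(2 * r - l)) (-r), γ i * x (k + i)) +
              lamrinv * x (k - r)) n = x n) ∧
      IsUnit (lamrinv - (p : ZMod (p ^ 2)) * γ (-r)) := by
  have hpp : (p : ZMod (p ^ 2)) * p = 0 := by rw [← Nat.cast_mul, ← sq, ZMod.natCast_self]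
  have hγ := linearCA_Icc_shift (lamrinv * lamrinv) β l r
  refine ⟨fun j => if j < -r then lamrinv * lamrinv * β (j + 2 * r) else 0,
    linearCA_perturbed_shift_leftInverse hpp hinv hT (fun _ _ => rfl) hγ,
    linearCA_perturbed_shift_rightInverse hpp hinv hT (fun _ _ => rfl) hγ, ?_⟩
  simpa using IsUnit.of_mul_eq_one lamr hinv

/-- Let `p` be prime and `T` the invertible linear CA on `(ZMod p²)^ℤ` with right
permutative local rule `f(x_l,...,x_r) = p·Σ_{i=l}^{r-1} β_i x_i + λ_r x_r (mod p²)`,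
where `λ_r` is a unit of `ZMod p²` with inverse `λ_r⁻¹`. Then the inverse of `T` is the CA
with local rule supported on coordinates `-(2r-l),...,-r` of the form
`g(x_{-(2r-l)},...,x_{-r}) = -p·Σ_{i=-(2r-l)}^{-r} γ_i x_i + λ_r⁻¹ x_{-r}` for suitable
`γ_i ∈ ZMod p²`; in particular the total coefficient of its rightmost variable `x_{-r}`
is a unit, i.e. the inverse of a right permutative invertible linear CA is again right
permutative. -/
theorem stmt7 (p : ℕ) (hp : p.Prime) (l r : ℤ) (hlr : l < r)
    (β : ℤ → ZMod (p ^ 2)) (lamr lamrinv : ZMod (p ^ 2)) (hinv : lamrinv * lamr = 1)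
    (T : (ℤ → ZMod (p ^ 2)) → ℤ → ZMod (p ^ 2))
    (hT : ∀ x n, T x n =
      (p : ZMod (p ^ 2)) * ∑ i ∈ Finset.Icc l (r - 1), β i * x (n + i) + lamr * x (n + r)) :
    ∃ γ : ℤ → ZMod (p ^ 2),
      (∀ x : ℤ → ZMod (p ^ 2), ∀ n : ℤ,
        (fun (y : ℤ → ZMod (p ^ 2)) (k : ℤ) =>
            -((p : ZMod (p ^ 2)) * ∑ i ∈ Finset.Icc (-(2 * r - l)) (-r), γ i * y (k + i)) +
              lamrinv * y (k - r)) (T x) n = x n) ∧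
      (∀ x : ℤ → ZMod (p ^ 2), ∀ n : ℤ,
        T (fun k =>
            -((p : ZMod (p ^ 2)) * ∑ i ∈ Finset.Icc (-(2 * r - l)) (-r), γ i * x (k + i)) +
              lamrinv * x (k - r)) n = x n) ∧
      IsUnit (lamrinv - (p : ZMod (p ^ 2)) * γ (-r)) :=
  stmt7_general p l r β lamr lamrinv hinv T hT
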